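/- The system C is complete for classical propositional semantics: if every Boolean valuation that makes all formulas in Γ true makes A true, then A is derivable in C from assumptions in Γ. -/

import Mathlib

/- Milne's system **C** of classical propositional logic with general
introduction and general elimination rules, including Tarski's Rule. -/
inductive Formula : Type
  | atom : ℕ → Formula
  | neg  : Formula → Formula
  | conj : Formula → Formula → Formula
  | disj : Formula → Formula → Formula
  | imp  : Formula → Formula → Formula
  deriving DecidableEq

/-- Derivability `Γ ⊢_C A` in the system **C**.  Discharge of an assumption is
rendered by `insert`ing it into the context of the corresponding premise. -/
inductive Deriv : Set Formula → Formula → Prop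
  | ass {Γ A} : A ∈ Γ → Deriv Γ A
  | andI {Γ A B C} : Deriv Γ A → Deriv Γ B →
      Deriv (insert (Formula.conj A B) Γ) C → Deriv Γ C
  | andE {Γ A B C} : Deriv Γ (Formula.conj A B) →
      Deriv (insert A (insert B Γ)) C → Deriv Γ C
  | orI₁ {Γ A B C} : Deriv Γ A →
      Deriv (insert (Formula.disj A B) Γ) C → Deriv Γ C
  | orI₂ {Γ A B C} : Deriv Γ B →
      Deriv (insert (Formula.disj A B) Γ) C → Deriv Γ C
  | orE {Γ A B C} : Deriv Γ (Formula.disj A B) →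
      Deriv (insert A Γ) C → Deriv (insert B Γ) C → Deriv Γ C
  | impI {Γ A B C} : Deriv Γ B →
      Deriv (insert (Formula.imp A B) Γ) C → Deriv Γ C
  | tr {Γ A B C} : Deriv (insert A Γ) C →
      Deriv (insert (Formula.imp A B) Γ) C → Deriv Γ C
  | impE {Γ A B C} : Deriv Γ (Formula.imp A B) → Deriv Γ A →
      Deriv (insert B Γ) C → Deriv Γ C
  | negI {Γ A C} : Deriv (insert A Γ) C →
      Deriv (insert (Formula.neg A) Γ) C → Deriv Γ C
  | negE {Γ A C} : Deriv Γ (Formula.neg A) → Deriv Γ A → Deriv Γ C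
/-- The value of a formula under a Boolean valuation of the atoms, by the
classical truth tables for ¬, ∧, ∨, ⊃. -/
def Formula.eval (v : ℕ → Bool) : Formula → Bool
  | .atom n => v n
  | .neg A => !(A.eval v)
  | .conj A B => A.eval v && B.eval v
  | .disj A B => A.eval v || B.eval v
  | .imp A B => !(A.eval v) || B.eval v

/-!
Lindenbaum's construction. If `Γ ⊬ A`, extend `Γ` by the Teichmüller–Tukey lemma to a maximal
`Δ ⊬ A`; this needs only that derivations use finitely many assumptions. Every rule of C concludes
an arbitrary formula, so each one becomes a closure property of `Δ` as it stands: `X ∈ Δ` as soon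
as any derivation of `A` from `insert X Δ` yields one from `Δ`. Hence membership in `Δ` obeys the
truth tables (Tarski's rule provides `B ∉ Δ → B ⊃ C ∈ Δ`), so the valuation reading atoms off `Δ`
makes `Γ` true and `A` false.
-/

open Set

namespace Deriv

variable {Γ Δ : Set Formula} {A : Formula}

theorem mono (h : Deriv Γ A) (hΓΔ : Γ ⊆ Δ) : Deriv Δ A := by
  induction h generalizing Δ with
  | ass h => exact ass (hΓΔ h)
  | andI _ _ _ ih₁ ih₂ ih₃ => exact andI (ih₁ hΓΔ) (ih₂ hΓΔ) (ih₃ (insert_subset_insert hΓΔ))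
  | andE _ _ ih₁ ih₂ =>
    exact andE (ih₁ hΓΔ) (ih₂ (insert_subset_insert (insert_subset_insert hΓΔ)))
  | orI₁ _ _ ih₁ ih₂ => exact orI₁ (ih₁ hΓΔ) (ih₂ (insert_subset_insert hΓΔ))
  | orI₂ _ _ ih₁ ih₂ => exact orI₂ (ih₁ hΓΔ) (ih₂ (insert_subset_insert hΓΔ))
  | orE _ _ _ ih₁ ih₂ ih₃ =>
    exact orE (ih₁ hΓΔ) (ih₂ (insert_subset_insert hΓΔ)) (ih₃ (insert_subset_insert hΓΔ))
  | impI _ _ ih₁ ih₂ => exact impI (ih₁ hΓΔ) (ih₂ (insert_subset_insert hΓΔ))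
  | tr _ _ ih₁ ih₂ => exact tr (ih₁ (insert_subset_insert hΓΔ)) (ih₂ (insert_subset_insert hΓΔ))
  | impE _ _ _ ih₁ ih₂ ih₃ => exact impE (ih₁ hΓΔ) (ih₂ hΓΔ) (ih₃ (insert_subset_insert hΓΔ))
  | negI _ _ ih₁ ih₂ => exact negI (ih₁ (insert_subset_insert hΓΔ)) (ih₂ (insert_subset_insert hΓΔ))
  | negE _ _ ih₁ ih₂ => exact negE (ih₁ hΓΔ) (ih₂ hΓΔ)

theorem exists_finset_subset (h : Deriv Γ A) : ∃ Δ : Finset Formula, ↑Δ ⊆ Γ ∧ Deriv Δ A := by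
  induction h with
  | @ass _ A h => exact ⟨{A}, by simpa using h, ass (by simp)⟩
  | @andI _ A B _ _ _ _ ih₁ ih₂ ih₃ =>
    obtain ⟨Δ₁, _, d₁⟩ := ih₁
    obtain ⟨Δ₂, _, d₂⟩ := ih₂
    obtain ⟨Δ₃, _, d₃⟩ := ih₃
    refine ⟨Δ₁ ∪ Δ₂ ∪ Δ₃.erase (A.conj B), ?_, andI (d₁.mono ?_) (d₂.mono ?_) (d₃.mono ?_)⟩
    all_goals push_cast; grind
  | @andE _ A B _ _ _ ih₁ ih₂ =>
    obtain ⟨Δ₁, _, d₁⟩ := ih₁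
    obtain ⟨Δ₂, _, d₂⟩ := ih₂
    refine ⟨Δ₁ ∪ (Δ₂.erase A).erase B, ?_, andE (d₁.mono ?_) (d₂.mono ?_)⟩
    all_goals push_cast; grind
  | @orI₁ _ A B _ _ _ ih₁ ih₂ =>
    obtain ⟨Δ₁, _, d₁⟩ := ih₁
    obtain ⟨Δ₂, _, d₂⟩ := ih₂
    refine ⟨Δ₁ ∪ Δ₂.erase (A.disj B), ?_, orI₁ (B := B) (d₁.mono ?_) (d₂.mono ?_)⟩
    all_goals push_cast; grind
  | @orI₂ _ A B _ _ _ ih₁ ih₂ =>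
    obtain ⟨Δ₁, _, d₁⟩ := ih₁
    obtain ⟨Δ₂, _, d₂⟩ := ih₂
    refine ⟨Δ₁ ∪ Δ₂.erase (A.disj B), ?_, orI₂ (A := A) (d₁.mono ?_) (d₂.mono ?_)⟩
    all_goals push_cast; grind
  | @orE _ A B _ _ _ _ ih₁ ih₂ ih₃ =>
    obtain ⟨Δ₁, _, d₁⟩ := ih₁
    obtain ⟨Δ₂, _, d₂⟩ := ih₂
    obtain ⟨Δ₃, _, d₃⟩ := ih₃
    refine ⟨Δ₁ ∪ Δ₂.erase A ∪ Δ₃.erase B, ?_, orE (d₁.mono ?_) (d₂.mono ?_) (d₃.mono ?_)⟩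
    all_goals push_cast; grind
  | @impI _ A B _ _ _ ih₁ ih₂ =>
    obtain ⟨Δ₁, _, d₁⟩ := ih₁
    obtain ⟨Δ₂, _, d₂⟩ := ih₂
    refine ⟨Δ₁ ∪ Δ₂.erase (A.imp B), ?_, impI (A := A) (d₁.mono ?_) (d₂.mono ?_)⟩
    all_goals push_cast; grind
  | @tr _ A B _ _ _ ih₁ ih₂ =>
    obtain ⟨Δ₁, _, d₁⟩ := ih₁
    obtain ⟨Δ₂, _, d₂⟩ := ih₂
    refine ⟨Δ₁.erase A ∪ Δ₂.erase (A.imp B), ?_, tr (A := A) (B := B) (d₁.mono ?_) (d₂.mono ?_)⟩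
    all_goals push_cast; grind
  | @impE _ A B _ _ _ _ ih₁ ih₂ ih₃ =>
    obtain ⟨Δ₁, _, d₁⟩ := ih₁
    obtain ⟨Δ₂, _, d₂⟩ := ih₂
    obtain ⟨Δ₃, _, d₃⟩ := ih₃
    refine ⟨Δ₁ ∪ Δ₂ ∪ Δ₃.erase B, ?_, impE (d₁.mono ?_) (d₂.mono ?_) (d₃.mono ?_)⟩
    all_goals push_cast; grind
  | @negI _ A _ _ _ ih₁ ih₂ =>
    obtain ⟨Δ₁, _, d₁⟩ := ih₁
    obtain ⟨Δ₂, _, d₂⟩ := ih₂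
    refine ⟨Δ₁.erase A ∪ Δ₂.erase A.neg, ?_, negI (A := A) (d₁.mono ?_) (d₂.mono ?_)⟩
    all_goals push_cast; grind
  | negE _ _ ih₁ ih₂ =>
    obtain ⟨Δ₁, _, d₁⟩ := ih₁
    obtain ⟨Δ₂, _, d₂⟩ := ih₂
    exact ⟨Δ₁ ∪ Δ₂, by push_cast; grind, negE (d₁.mono (by simp)) (d₂.mono (by simp))⟩

end Deriv

theorem exists_maximal_not_deriv {Γ : Set Formula} {A : Formula} (h : ¬Deriv Γ A) :
    ∃ Δ, Γ ⊆ Δ ∧ Maximal (¬Deriv · A) Δ := by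
  have hF : Order.IsOfFiniteCharacter {Θ | ¬Deriv Θ A} := fun Θ =>
    ⟨fun hΘ Δ hΔΘ _ hΔ => hΘ (hΔ.mono hΔΘ), fun H hΘ => by
      obtain ⟨Δ, hΔΘ, hΔ⟩ := hΘ.exists_finset_subset
      exact H Δ hΔΘ Δ.finite_toSet hΔ⟩
  exact hF.exists_maximal h

section Maximal

open Deriv

variable {Δ : Set Formula} {A B C : Formula}

theorem deriv_insert_of_maximal (hΔ : Maximal (¬Deriv · A) Δ) (hB : B ∉ Δ) :
    Deriv (insert B Δ) A := by
  by_contra h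
  exact hB (hΔ.2 h (subset_insert B Δ) (mem_insert B Δ))

theorem mem_of_maximal (hΔ : Maximal (¬Deriv · A) Δ) (H : Deriv (insert B Δ) A → Deriv Δ A) :
    B ∈ Δ := by
  by_contra hB
  exact hΔ.1 (H (deriv_insert_of_maximal hΔ hB))

theorem neg_mem_iff_of_maximal (hΔ : Maximal (¬Deriv · A) Δ) : B.neg ∈ Δ ↔ B ∉ Δ :=
  ⟨fun hn hB => hΔ.1 (negE (ass hn) (ass hB)),
    fun hB => mem_of_maximal hΔ (negI (deriv_insert_of_maximal hΔ hB))⟩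

theorem conj_mem_iff_of_maximal (hΔ : Maximal (¬Deriv · A) Δ) :
    B.conj C ∈ Δ ↔ B ∈ Δ ∧ C ∈ Δ := by
  refine ⟨fun h => ⟨?_, ?_⟩, fun ⟨hB, hC⟩ => mem_of_maximal hΔ (andI (ass hB) (ass hC))⟩
  · exact mem_of_maximal hΔ fun d =>
      andE (ass h) (d.mono (insert_subset_insert (subset_insert C Δ)))
  · exact mem_of_maximal hΔ fun d => andE (ass h) (d.mono (subset_insert B _))

theorem disj_mem_iff_of_maximal (hΔ : Maximal (¬Deriv · A) Δ) :
    B.disj C ∈ Δ ↔ B ∈ Δ ∨ C ∈ Δ := by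
  refine ⟨fun h => ?_, ?_⟩
  · by_contra! hBC
    exact hΔ.1 (orE (ass h) (deriv_insert_of_maximal hΔ hBC.1) (deriv_insert_of_maximal hΔ hBC.2))
  · rintro (hB | hC)
    · exact mem_of_maximal hΔ (orI₁ (ass hB))
    · exact mem_of_maximal hΔ (orI₂ (ass hC))

theorem imp_mem_iff_of_maximal (hΔ : Maximal (¬Deriv · A) Δ) :
    B.imp C ∈ Δ ↔ (B ∈ Δ → C ∈ Δ) := by
  refine ⟨fun h hB => mem_of_maximal hΔ (impE (ass h) (ass hB)), fun h => ?_⟩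
  by_cases hB : B ∈ Δ
  · exact mem_of_maximal hΔ (impI (ass (h hB)))
  · exact mem_of_maximal hΔ (tr (deriv_insert_of_maximal hΔ hB))

open Classical in
noncomputable def canonicalValuation (Δ : Set Formula) (n : ℕ) : Bool :=
  decide (Formula.atom n ∈ Δ)

theorem eval_canonicalValuation (hΔ : Maximal (¬Deriv · A) Δ) (B : Formula) :
    B.eval (canonicalValuation Δ) = true ↔ B ∈ Δ := by
  induction B with
  | atom n => simp [Formula.eval, canonicalValuation]
  | neg B ih => simp [Formula.eval, ← ih, neg_mem_iff_of_maximal hΔ]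
  | conj B C ihB ihC => simp [Formula.eval, ← ihB, ← ihC, conj_mem_iff_of_maximal hΔ]
  | disj B C ihB ihC => simp [Formula.eval, ← ihB, ← ihC, disj_mem_iff_of_maximal hΔ]
  | imp B C ihB ihC => simp [Formula.eval, ← ihB, ← ihC, imp_mem_iff_of_maximal hΔ, imp_iff_not_or]

end Maximal

/-- Completeness of the system C for classical propositional
semantics: if every Boolean valuation making all formulas of `Γ` true makes
`A` true, then `A` is derivable in C from assumptions in `Γ`. -/
theorem completeness (Γ : Set Formula) (A : Formula)
    (h : ∀ v : ℕ → Bool, (∀ B ∈ Γ, B.eval v = true) → A.eval v = true) :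
    Deriv Γ A := by
  by_contra hA
  obtain ⟨Δ, hΓΔ, hΔ⟩ := exists_maximal_not_deriv hA
  have hv := h (canonicalValuation Δ) fun B hB => (eval_canonicalValuation hΔ B).2 (hΓΔ hB)
  exact hΔ.1 (.ass ((eval_canonicalValuation hΔ A).1 hv))
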